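/- arXiv:2109.01746 — 3 statements merged into one kernel-verified Lean document; each statement's English description precedes it below -/
import Mathlib

section
/- Let P be a nonnegative n×n matrix. If Pa ⪯ a for every vector a in the set {e_1, e_2, …, e_n, j_n}, where e_1,…,e_n are the standard basis vectors of ℝⁿ and j_n = (1/n,…,1/n), then P is doubly stochastic. -/
def ColStochastic {n : ℕ} (P : Matrix (Fin n) (Fin n) ℝ) : Prop :=
  (∀ i j, 0 ≤ P i j) ∧ ∀ j, ∑ i, P i j = 1

def RowStochastic {n : ℕ} (P : Matrix (Fin n) (Fin n) ℝ) : Prop :=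
  (∀ i j, 0 ≤ P i j) ∧ ∀ i, ∑ j, P i j = 1

def DoublyStochastic {n : ℕ} (P : Matrix (Fin n) (Fin n) ℝ) : Prop :=
  ColStochastic P ∧ RowStochastic P

/-- The decreasing rearrangement `a↓` of a vector `a ∈ ℝⁿ`. -/
noncomputable def decRearrange {n : ℕ} (a : Fin n → ℝ) : Fin n → ℝ :=
  fun i => a (Tuple.sort (fun j => -a j) i)

/-- `Majorizes a b` means the vector `a` majorizes the vector `b`, i.e. `b ⪯ a`:
the partial sums of `b↓` are at most those of `a↓`, and the total sums are equal. -/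
noncomputable def Majorizes {n : ℕ} (a b : Fin n → ℝ) : Prop :=
  (∑ i, b i = ∑ i, a i) ∧
  ∀ k : ℕ, k < n →
    ∑ i ∈ Finset.univ.filter (fun i : Fin n => (i : ℕ) < k), decRearrange b i ≤
    ∑ i ∈ Finset.univ.filter (fun i : Fin n => (i : ℕ) < k), decRearrange a i

/-! The total-sum part of `P e_j ⪯ e_j` says that column `j` of `P` sums to `1`. The vector
`P j_n` has entries `(row sum)/n`, and `P j_n ⪯ j_n` bounds its largest entry by `1/n`, so every
row sum is at most `1`; as the row sums add up to the sum of the column sums, `n`, they all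
equal `1`. -/

lemma le_decRearrange_zero {n : ℕ} (b : Fin (n + 1) → ℝ) (i : Fin (n + 1)) :
    b i ≤ decRearrange b 0 := by
  set σ := Tuple.sort (fun j => -b j)
  have hmono : Monotone ((fun j => -b j) ∘ σ) := Tuple.monotone_sort _
  have h := hmono (Fin.zero_le (σ.symm i))
  simpa [decRearrange, σ] using h

lemma Majorizes.le_of_const {n : ℕ} {c : ℝ} {b : Fin n → ℝ}
    (h : Majorizes (fun _ => c) b) (i : Fin n) : b i ≤ c := by
  obtain _ | _ | m := n
  · exact i.elim0
  · have hsum := h.1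
    rw [Fin.sum_univ_one, Fin.sum_univ_one] at hsum
    rw [Fin.fin_one_eq_zero i, hsum]
  · have hfirst := h.2 1 (by omega)
    have hfilter : Finset.univ.filter (fun k : Fin (m + 2) => (k : ℕ) < 1) = {0} := by
      ext k
      simp only [Finset.mem_filter, Finset.mem_univ, true_and, Finset.mem_singleton, Fin.ext_iff,
        Fin.val_zero, Nat.lt_one_iff]
    rw [hfilter, Finset.sum_singleton, Finset.sum_singleton] at hfirst
    exact (le_decRearrange_zero b i).trans hfirst

lemma sum_mulVec_ite_eq {m n R : Type*} [Fintype m] [Fintype n] [DecidableEq n]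
    [NonAssocSemiring R] (P : Matrix m n R) (j : n) :
    ∑ i, (P.mulVec fun k => if k = j then (1 : R) else 0) i = ∑ i, P i j := by
  simp [Matrix.mulVec, dotProduct]

lemma mulVec_const_apply {m n R : Type*} [Fintype n] [NonUnitalNonAssocSemiring R]
    (P : Matrix m n R) (c : R) (i : m) :
    (P.mulVec fun _ => c) i = (∑ j, P i j) * c := by
  simp [Matrix.mulVec, dotProduct, Finset.sum_mul]

theorem doublyStochastic_of_majorizes_basis {n : ℕ} (P : Matrix (Fin n) (Fin n) ℝ)
    (hP : ∀ i j, 0 ≤ P i j)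
    (he : ∀ j : Fin n,
      Majorizes (fun i : Fin n => if i = j then (1 : ℝ) else 0)
        (P.mulVec (fun i : Fin n => if i = j then (1 : ℝ) else 0)))
    (hj : Majorizes (fun _ : Fin n => (1 : ℝ) / n)
        (P.mulVec (fun _ : Fin n => (1 : ℝ) / n))) :
    DoublyStochastic P := by
  have hcol : ∀ j, ∑ i, P i j = 1 := fun j => by
    simpa [sum_mulVec_ite_eq] using (he j).1
  have hrow_le : ∀ i, ∑ j, P i j ≤ 1 := fun i => by
    have hn : (0 : ℝ) < n := by exact_mod_cast i.pos
    have h := hj.le_of_const i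
    rw [mulVec_const_apply] at h
    exact le_of_mul_le_mul_right (by simpa using h) (by positivity)
  have htotal : ∑ i, ∑ j, P i j = ∑ _i : Fin n, (1 : ℝ) :=
    Finset.sum_comm.trans (Finset.sum_congr rfl fun j _ => hcol j)
  refine ⟨⟨hP, hcol⟩, hP, fun i => ?_⟩
  exact (Finset.sum_eq_sum_iff_of_le fun i _ => hrow_le i).1 htotal i (Finset.mem_univ i)
end

section
/- Let a and b be vectors in ℝⁿ with nonnegative, nonincreasing coordinates such that b ⪯ a and b ≠ a. Then there exists a vector c ∈ ℝⁿ with nonnegative coordinates such that: (i) the coordinates of c are nonincreasing; (ii) b ⪯ c and c ⪯ a; (iii) d_H(b,c) < d_H(b,a); and (iv) c = T a for some n×n doubly stochastic matrix T. -/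
/-!
Let `k` be the first index with `a k < b k` and `j < k` the last index before it with
`b j < a j`; between `j` and `k` the vectors agree. Moving `δ = min (a j - b j) (b k - a k)` from
coordinate `j` to coordinate `k` of `a` keeps it nonincreasing, keeps it between `b` and `a` in
the majorization order (the partial sums of `a` drop by `δ` only on `[j, k)`, where they exceed
those of `b` by at least `a j - b j`), and makes one more coordinate agree with `b`. The move is
the T-transform `(1 - t) • 1 + t • (j k)` of `a` with `t = δ / (a j - a k)`.
-/

open Finset Matrix

section Transfer

variable {ι : Type*} [DecidableEq ι]

def transfer (x : ι → ℝ) (j k : ι) (δ : ℝ) : ι → ℝ :=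
  x - Pi.single j δ + Pi.single k δ

theorem transfer_apply_left {x : ι → ℝ} {j k : ι} (hjk : j ≠ k) (δ : ℝ) :
    transfer x j k δ j = x j - δ := by
  simp [transfer, hjk]

theorem transfer_apply_right {x : ι → ℝ} {j k : ι} (hjk : j ≠ k) (δ : ℝ) :
    transfer x j k δ k = x k + δ := by
  simp [transfer, hjk.symm]

theorem transfer_apply_of_ne {x : ι → ℝ} {j k i : ι} (hj : i ≠ j) (hk : i ≠ k) (δ : ℝ) :
    transfer x j k δ i = x i := by
  simp [transfer, hj, hk]

theorem transfer_le_of_ne_right {x : ι → ℝ} {j k i : ι} {δ : ℝ}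
    (hδ : 0 ≤ δ) (hi : i ≠ k) : transfer x j k δ i ≤ x i := by
  simp only [transfer, Pi.add_apply, Pi.sub_apply, Pi.single_apply, hi, if_false]
  split_ifs <;> linarith

theorem le_transfer_of_ne_left {x : ι → ℝ} {j k i : ι} {δ : ℝ}
    (hδ : 0 ≤ δ) (hi : i ≠ j) : x i ≤ transfer x j k δ i := by
  simp only [transfer, Pi.add_apply, Pi.sub_apply, Pi.single_apply, hi, if_false]
  split_ifs <;> linarith

variable [Fintype ι]

theorem sum_transfer (x : ι → ℝ) (j k : ι) (δ : ℝ) :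
    ∑ i, transfer x j k δ i = ∑ i, x i := by
  simp [transfer, sum_add_distrib, sum_sub_distrib]

def tTransform (t : ℝ) (j k : ι) : Matrix ι ι ℝ :=
  (1 - t) • 1 + t • (Equiv.swap j k).permMatrix ℝ

theorem tTransform_mem_doublyStochastic {t : ℝ} (ht₀ : 0 ≤ t) (ht₁ : t ≤ 1) (j k : ι) :
    tTransform t j k ∈ doublyStochastic ℝ ι :=
  convex_doublyStochastic (one_mem _) permMatrix_mem_doublyStochastic (by linarith) ht₀
    (by ring)

theorem tTransform_mulVec (t : ℝ) (j k : ι) (x : ι → ℝ) :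
    tTransform t j k *ᵥ x = transfer x j k (t * (x j - x k)) := by
  ext i
  simp only [tTransform, add_mulVec, smul_mulVec, one_mulVec, permMatrix_mulVec, transfer,
    Pi.add_apply, Pi.sub_apply, Pi.smul_apply, Function.comp_apply, Equiv.swap_apply_def,
    Pi.single_apply, smul_eq_mul]
  split_ifs <;> simp_all <;> ring

end Transfer

theorem Matrix.mulVec_nonneg_of_mem_doublyStochastic {ι : Type*} [Fintype ι] [DecidableEq ι]
    {M : Matrix ι ι ℝ} (hM : M ∈ doublyStochastic ℝ ι) {x : ι → ℝ} (hx : ∀ i, 0 ≤ x i) (i : ι) :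
    0 ≤ (M *ᵥ x) i :=
  sum_nonneg fun j _ => mul_nonneg (nonneg_of_mem_doublyStochastic hM) (hx j)

theorem DoublyStochastic.of_mem {n : ℕ} {M : Matrix (Fin n) (Fin n) ℝ}
    (hM : M ∈ doublyStochastic ℝ (Fin n)) : DoublyStochastic M := by
  obtain ⟨h₀, hrow, hcol⟩ := mem_doublyStochastic_iff_sum.1 hM
  exact ⟨⟨h₀, hcol⟩, h₀, hrow⟩

theorem hammingDist_lt_hammingDist {ι β : Type*} [Fintype ι] [DecidableEq β] {x y z : ι → β}
    (hyz : ∀ i, x i = z i → x i = y i) {i : ι} (hz : x i ≠ z i) (hy : x i = y i) :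
    hammingDist x y < hammingDist x z := by
  refine card_lt_card ((ssubset_iff_of_subset fun l hl => ?_).2 ⟨i, by simpa, by simpa⟩)
  simp only [mem_filter, mem_univ, true_and] at hl ⊢
  exact fun h => hl (hyz l h)

section PrefixSum

variable {n : ℕ}

def prefixSum (x : Fin n → ℝ) (m : ℕ) : ℝ :=
  ∑ i ∈ Finset.univ.filter (fun i : Fin n => (i : ℕ) < m), x i

theorem prefixSum_of_le (x : Fin n → ℝ) {m : ℕ} (hm : n ≤ m) : prefixSum x m = ∑ i, x i := by
  rw [prefixSum, filter_true_of_mem fun i _ => i.isLt.trans_le hm]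

theorem prefixSum_succ (x : Fin n → ℝ) (k : Fin n) :
    prefixSum x (k + 1) = prefixSum x k + x k := by
  have hset : univ.filter (fun i : Fin n => (i : ℕ) < k + 1)
      = insert k (univ.filter (fun i : Fin n => (i : ℕ) < k)) := by
    ext i
    simp only [mem_filter, mem_univ, true_and, mem_insert, Fin.ext_iff]
    omega
  rw [prefixSum, hset, sum_insert (by simp), add_comm, prefixSum]

theorem prefixSum_mono {x y : Fin n → ℝ} {m : ℕ} (h : ∀ i : Fin n, (i : ℕ) < m → x i ≤ y i) :
    prefixSum x m ≤ prefixSum y m :=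
  sum_le_sum fun i hi => h i (mem_filter.1 hi).2

theorem prefixSum_add (x y : Fin n → ℝ) (m : ℕ) :
    prefixSum (x + y) m = prefixSum x m + prefixSum y m :=
  sum_add_distrib

theorem prefixSum_sub (x y : Fin n → ℝ) (m : ℕ) :
    prefixSum (x - y) m = prefixSum x m - prefixSum y m :=
  sum_sub_distrib _ _

theorem prefixSum_single (j : Fin n) (δ : ℝ) (m : ℕ) :
    prefixSum (Pi.single j δ) m = if (j : ℕ) < m then δ else 0 := by
  simp [prefixSum, Pi.single_apply]

theorem prefixSum_transfer (x : Fin n → ℝ) (j k : Fin n) (δ : ℝ) (m : ℕ) :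
    prefixSum (transfer x j k δ) m =
      prefixSum x m - (if (j : ℕ) < m then δ else 0) + (if (k : ℕ) < m then δ else 0) := by
  rw [transfer, prefixSum_add, prefixSum_sub, prefixSum_single, prefixSum_single]

theorem prefixSum_transfer_le (x : Fin n → ℝ) {j k : Fin n} (hjk : j < k) {δ : ℝ}
    (hδ : 0 ≤ δ) (m : ℕ) : prefixSum (transfer x j k δ) m ≤ prefixSum x m := by
  have hjk' : (j : ℕ) < k := hjk
  rw [prefixSum_transfer]
  split_ifs <;> linarith

theorem decRearrange_eq_self {a : Fin n → ℝ} (ha : Antitone a) : decRearrange a = a := by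
  have hm : Monotone (fun j => -a j) := fun _ _ h => neg_le_neg (ha h)
  unfold decRearrange
  rw [Tuple.sort_eq_refl_iff_monotone.2 hm]
  rfl

theorem majorizes_iff_of_antitone {a b : Fin n → ℝ} (ha : Antitone a) (hb : Antitone b) :
    Majorizes a b ↔ (∑ i, b i = ∑ i, a i) ∧ ∀ m, prefixSum b m ≤ prefixSum a m := by
  rw [Majorizes, decRearrange_eq_self ha, decRearrange_eq_self hb]
  refine and_congr_right fun hsum => ⟨fun h m => ?_, fun h m _ => h m⟩
  rcases lt_or_ge m n with hm | hm
  · exact h m hm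
  · rw [prefixSum_of_le a hm, prefixSum_of_le b hm, hsum]

end PrefixSum

structure IsTransferPair {ι : Type*} [LinearOrder ι] (a b : ι → ℝ) (j k : ι) : Prop where
  lt : j < k
  lt_left : b j < a j
  lt_right : a k < b k
  le_of_lt_right : ∀ i < k, b i ≤ a i
  eq_of_between : ∀ i, j < i → i < k → a i = b i

theorem exists_isTransferPair {n : ℕ} {a b : Fin n → ℝ} (hsum : ∑ i, b i = ∑ i, a i)
    (hpre : ∀ m, prefixSum b m ≤ prefixSum a m) (hne : b ≠ a) : ∃ j k, IsTransferPair a b j k := by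
  have hex : ∃ k, a k < b k := by
    by_contra! h
    exact hne (funext fun i => (sum_eq_sum_iff_of_le fun i _ => h i).1 hsum i (mem_univ i))
  obtain ⟨k, hk : a k < b k, hkmin⟩ := wellFounded_lt.has_min {k | a k < b k} hex
  have hbelow : ∀ i < k, b i ≤ a i := fun i hi => not_lt.1 fun h => hkmin i h hi
  have hlt : prefixSum b k < prefixSum a k := by
    have := hpre (k + 1)
    rw [prefixSum_succ, prefixSum_succ] at this
    linarith
  have hexj : ∃ j, j < k ∧ b j < a j := by
    by_contra! h
    exact (prefixSum_mono fun i hi => h i hi).not_gt hlt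
  obtain ⟨j, ⟨hjk, hj⟩, hjmax⟩ := wellFounded_gt.has_min {j | j < k ∧ b j < a j} hexj
  exact ⟨j, k, hjk, hj, hk, hbelow, fun i hji hik =>
    le_antisymm (not_lt.1 fun h => hjmax i ⟨hik, h⟩ hji) (hbelow i hik)⟩

namespace IsTransferPair

variable {ι : Type*} [LinearOrder ι] {a b : ι → ℝ} {j k : ι} {δ : ℝ}

theorem antitone_transfer (h : IsTransferPair a b j k) (ha : Antitone a) (hb : Antitone b)
    (hδ : 0 ≤ δ) (hδj : δ ≤ a j - b j) (hδk : δ ≤ b k - a k) : Antitone (transfer a j k δ) := by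
  have hjk := h.lt.ne
  have hcj := transfer_apply_left (x := a) hjk δ
  have hck := transfer_apply_right (x := a) hjk δ
  have hbk : b k ≤ b j := hb h.lt.le
  have hbelow : ∀ i, j < i → transfer a j k δ i ≤ b j := by
    intro i hji
    rcases lt_trichotomy i k with hik | rfl | hki
    · linarith [transfer_le_of_ne_right (x := a) (j := j) hδ hik.ne, h.eq_of_between i hji hik,
        hb hji.le]
    · linarith
    · linarith [transfer_le_of_ne_right (x := a) (j := j) hδ hki.ne', ha hki.le]
  have habove : ∀ i, i < k → b k ≤ transfer a j k δ i := by
    intro i hik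
    rcases lt_trichotomy i j with hij | rfl | hji
    · linarith [le_transfer_of_ne_left (x := a) (k := k) hδ hij.ne, ha hij.le]
    · linarith
    · linarith [le_transfer_of_ne_left (x := a) (k := k) hδ hji.ne', h.eq_of_between i hji hik,
        hb hik.le]
  intro i i' hii'
  rcases hii'.lt_or_eq with hlt | rfl
  · by_cases hij : i = j
    · subst hij; linarith [hbelow i' hlt]
    by_cases hik : i' = k
    · subst hik; linarith [habove i hlt]
    linarith [transfer_le_of_ne_right (x := a) (j := j) hδ hik, ha hii',
      le_transfer_of_ne_left (x := a) (k := k) hδ hij]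
  · rfl

theorem hammingDist_transfer_lt [Fintype ι] (h : IsTransferPair a b j k) :
    hammingDist b (transfer a j k (min (a j - b j) (b k - a k))) < hammingDist b a := by
  have hjk := h.lt.ne
  have hagree : ∀ i, b i = a i → b i = transfer a j k (min (a j - b j) (b k - a k)) i := by
    intro i hi
    rw [transfer_apply_of_ne (fun hij => h.lt_left.ne (by subst hij; exact hi))
      (fun hik => h.lt_right.ne' (by subst hik; exact hi))]
    exact hi
  rcases min_choice (a j - b j) (b k - a k) with hmin | hmin
  · exact hammingDist_lt_hammingDist hagree h.lt_left.ne
      (by rw [hmin, transfer_apply_left hjk]; ring)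
  · exact hammingDist_lt_hammingDist hagree h.lt_right.ne'
      (by rw [hmin, transfer_apply_right hjk]; ring)

end IsTransferPair

theorem IsTransferPair.prefixSum_le_prefixSum_transfer {n : ℕ} {a b : Fin n → ℝ} {j k : Fin n}
    (h : IsTransferPair a b j k) (hpre : ∀ m, prefixSum b m ≤ prefixSum a m) {δ : ℝ}
    (hδj : δ ≤ a j - b j) (m : ℕ) : prefixSum b m ≤ prefixSum (transfer a j k δ) m := by
  have hjk : (j : ℕ) < k := h.lt
  have hm := hpre m
  rw [prefixSum_transfer]
  by_cases hjm : (j : ℕ) < m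
  · by_cases hkm : (k : ℕ) < m
    · simp only [if_pos hjm, if_pos hkm]
      linarith
    · have hlift : prefixSum (b + Pi.single j (a j - b j)) m ≤ prefixSum a m := by
        refine prefixSum_mono fun i hi => ?_
        rcases eq_or_ne i j with rfl | hij
        · simp
        · simpa [hij] using h.le_of_lt_right i (show (i : ℕ) < k by omega)
      rw [prefixSum_add, prefixSum_single, if_pos hjm] at hlift
      simp only [if_pos hjm, if_neg hkm]
      linarith
  · have hkm : ¬(k : ℕ) < m := by omega
    simp only [if_neg hjm, if_neg hkm]
    linarith

theorem exists_intermediate_vector_general {n : ℕ} (a b : Fin n → ℝ)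
    (ha0 : ∀ i, 0 ≤ a i)
    (ha : Antitone a) (hb : Antitone b)
    (hmaj : Majorizes a b) (hne : b ≠ a) :
    ∃ c : Fin n → ℝ,
      (∀ i, 0 ≤ c i) ∧
      Antitone c ∧
      Majorizes c b ∧ Majorizes a c ∧
      hammingDist b c < hammingDist b a ∧
      ∃ T : Matrix (Fin n) (Fin n) ℝ, DoublyStochastic T ∧ T.mulVec a = c := by
  obtain ⟨hsum, hpre⟩ := (majorizes_iff_of_antitone ha hb).1 hmaj
  obtain ⟨j, k, h⟩ := exists_isTransferPair hsum hpre hne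
  set δ := min (a j - b j) (b k - a k)
  have hδ : 0 < δ := lt_min (sub_pos.2 h.lt_left) (sub_pos.2 h.lt_right)
  have hδj : δ ≤ a j - b j := min_le_left _ _
  have hδk : δ ≤ b k - a k := min_le_right _ _
  have hgap : δ ≤ a j - a k := by linarith [hb h.lt.le]
  set T := tTransform (δ / (a j - a k)) j k
  have hT : T ∈ doublyStochastic ℝ (Fin n) :=
    tTransform_mem_doublyStochastic (div_nonneg hδ.le (by linarith))
      ((div_le_one (by linarith)).2 hgap) j k
  have hTa : T *ᵥ a = transfer a j k δ := by
    rw [tTransform_mulVec, div_mul_cancel₀ _ (by linarith)]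
  have hc : Antitone (transfer a j k δ) := h.antitone_transfer ha hb hδ.le hδj hδk
  refine ⟨T *ᵥ a, mulVec_nonneg_of_mem_doublyStochastic hT ha0, hTa ▸ hc, ?_, ?_, ?_, T,
    DoublyStochastic.of_mem hT, rfl⟩
  · rw [hTa, majorizes_iff_of_antitone hc hb, sum_transfer]
    exact ⟨hsum, h.prefixSum_le_prefixSum_transfer hpre hδj⟩
  · rw [hTa, majorizes_iff_of_antitone ha hc, sum_transfer]
    exact ⟨rfl, prefixSum_transfer_le a h.lt hδ.le⟩
  · rw [hTa]
    exact h.hammingDist_transfer_lt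

theorem exists_intermediate_vector {n : ℕ} (a b : Fin n → ℝ)
    (ha0 : ∀ i, 0 ≤ a i) (hb0 : ∀ i, 0 ≤ b i)
    (ha : Antitone a) (hb : Antitone b)
    (hmaj : Majorizes a b) (hne : b ≠ a) :
    ∃ c : Fin n → ℝ,
      (∀ i, 0 ≤ c i) ∧
      Antitone c ∧
      Majorizes c b ∧ Majorizes a c ∧
      hammingDist b c < hammingDist b a ∧
      ∃ T : Matrix (Fin n) (Fin n) ℝ, DoublyStochastic T ∧ T.mulVec a = c :=
  exists_intermediate_vector_general a b ha0 ha hb hmaj hne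
end

section
/- Let a and b be vectors in ℝⁿ with nonnegative coordinates. Then a majorizes b (b ⪯ a) if and only if b lies in the convex hull of the set { P_σ a : σ ∈ S_n } of all vectors obtained by permuting the coordinates of a (the S_n-permutohedron generated by a). In particular, if b ⪯ a then there is a doubly stochastic n×n matrix P with b = P a, and conversely. -/
def permMatrix {n : ℕ} (σ : Equiv.Perm (Fin n)) : Matrix (Fin n) (Fin n) ℝ :=
  fun i j => if i = σ j then 1 else 0

/-!
Together with `∑ b = ∑ a`, the inequalities `∑ i ∈ S, b i ≤ topSum a #S`, where `topSum a k` is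
the sum of the `k` largest coordinates of `a`, cut out `{b | b ⪯ a}`; every permutation of `a`
satisfies them, so the permutohedron lies in this convex set. Conversely, if `b ⪯ a`, then for
every linear functional `c` we have `c ⬝ b ≤ c↓ ⬝ b↓ ≤ c↓ ⬝ a↓` by the rearrangement inequality
and Abel summation against the antitone `c↓`, and `c↓ ⬝ a↓` is `c` evaluated at a permutation
of `a`; hence no hyperplane separates `b` from the permutohedron. Birkhoff's theorem identifies
the permutohedron with `{P a | P doubly stochastic}`.
-/

open Finset Matrix

lemma Fin.val_le_of_strictMono {k n : ℕ} {g : Fin k → Fin n} (hg : StrictMono g) (j : Fin k) :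
    (j : ℕ) ≤ g j := by
  obtain ⟨j, hj⟩ := j
  induction j with
  | zero => exact Nat.zero_le _
  | succ m ih => exact (ih (by omega)).trans_lt (hg (Fin.mk_lt_mk.2 m.lt_succ_self))

lemma Fin.map_castLEEmb_univ {k n : ℕ} (hk : k ≤ n) :
    univ.map (Fin.castLEEmb hk) = univ.filter fun i : Fin n => (i : ℕ) < k := by
  ext i
  simp only [mem_map, mem_univ, true_and, mem_filter, Fin.castLEEmb_apply]
  exact ⟨fun ⟨j, hj⟩ => hj ▸ j.isLt, fun hi => ⟨⟨i, hi⟩, rfl⟩⟩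

lemma sum_le_sum_filter_val_lt_card {n : ℕ} {M : Type*} [AddCommMonoid M] [PartialOrder M]
    [IsOrderedAddMonoid M] {f : Fin n → M} (hf : Antitone f) (S : Finset (Fin n)) :
    ∑ i ∈ S, f i ≤ ∑ i ∈ univ.filter (fun i : Fin n => (i : ℕ) < #S), f i := by
  have hS : #S ≤ n := by simpa using card_le_univ S
  rw [← Fin.map_castLEEmb_univ hS, sum_map]
  conv_lhs => rw [← map_orderEmbOfFin_univ S rfl, sum_map]
  exact sum_le_sum fun j _ => hf (Fin.val_le_of_strictMono (S.orderEmbOfFin rfl).strictMono j)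

theorem mul_sum_range_le_sum_range_mul {c d : ℕ → ℝ} {n : ℕ} (hc : ∀ i < n, c (i + 1) ≤ c i)
    (hd : ∀ k ≤ n, 0 ≤ ∑ i ∈ range k, d i) :
    c n * ∑ i ∈ range (n + 1), d i ≤ ∑ i ∈ range (n + 1), c i * d i := by
  induction n with
  | zero => simp
  | succ n ih =>
    have h₁ := ih (fun i hi => hc i (by omega)) (fun k hk => hd k (by omega))
    have h₂ := mul_le_mul_of_nonneg_right (hc n n.lt_succ_self) (hd (n + 1) le_rfl)
    rw [sum_range_succ, sum_range_succ (fun i => c i * d i), mul_add]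
    linarith

theorem sum_mul_le_sum_mul_of_antitone {n : ℕ} {c u v : Fin n → ℝ} (hc : Antitone c)
    (hpart : ∀ k < n, ∑ i ∈ univ.filter (fun i : Fin n => (i : ℕ) < k), v i ≤
      ∑ i ∈ univ.filter (fun i : Fin n => (i : ℕ) < k), u i)
    (htot : ∑ i, v i = ∑ i, u i) :
    ∑ i, c i * v i ≤ ∑ i, c i * u i := by
  obtain _ | m := n
  · simp
  let pad : (Fin (m + 1) → ℝ) → ℕ → ℝ := fun f i => if h : i < m + 1 then f ⟨i, h⟩ else 0
  have hsum_pad : ∀ f k, k ≤ m + 1 → ∑ i ∈ range k, pad f i =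
      ∑ i ∈ univ.filter (fun i : Fin (m + 1) => (i : ℕ) < k), f i := fun f k hk => by
    rw [← Fin.map_castLEEmb_univ hk, sum_map, ← Fin.sum_univ_eq_sum_range]
    exact sum_congr rfl fun i _ => dif_pos (i.isLt.trans_le hk)
  have key := mul_sum_range_le_sum_range_mul (c := pad c) (d := pad (u - v)) (n := m)
    (fun i hi => by
      simp only [pad, dif_pos (Nat.succ_lt_succ hi), dif_pos (Nat.lt_succ_of_lt hi)]
      exact hc (Fin.mk_le_mk.2 i.le_succ))
    (fun k hk => by simpa [hsum_pad _ k (by omega), sum_sub_distrib] using hpart k (by omega))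
  have htot' : ∑ i, (u - v) i = 0 := by simp [sum_sub_distrib, htot]
  rw [hsum_pad _ _ le_rfl, filter_true_of_mem fun i _ => i.isLt, htot', mul_zero,
    ← Fin.sum_univ_eq_sum_range] at key
  simp only [pad, Fin.is_lt, dif_pos, Fin.eta, Pi.sub_apply, mul_sub, sum_sub_distrib] at key
  linarith

theorem mem_convexHull_of_forall_exists_dotProduct_le {ι : Type*} [Fintype ι]
    {s : Set (ι → ℝ)} (hs : s.Finite) {x : ι → ℝ} (h : ∀ c, ∃ y ∈ s, c ⬝ᵥ x ≤ c ⬝ᵥ y) :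
    x ∈ convexHull ℝ s := by
  classical
  by_contra hx
  obtain ⟨f, u, hfs, hux⟩ :=
    geometric_hahn_banach_closed_point (convex_convexHull ℝ s) (hs.isClosed_convexHull ℝ) hx
  let c : ι → ℝ := fun i => f fun j => if i = j then 1 else 0
  have hf : ∀ z, f z = c ⬝ᵥ z := fun z => by
    rw [dotProduct_comm]
    exact (f : (ι → ℝ) →ₗ[ℝ] ℝ).pi_apply_eq_sum_univ z
  obtain ⟨y, hy, hxy⟩ := h c
  have := hfs y (subset_convexHull ℝ s hy)
  linarith [hf x, hf y]

theorem mem_convexHull_range_comp_perm_iff {ι R : Type*} [Fintype ι] [DecidableEq ι] [Field R]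
    [LinearOrder R] [IsStrictOrderedRing R] {a b : ι → R} :
    b ∈ convexHull R (Set.range fun σ : Equiv.Perm ι => a ∘ σ) ↔
      ∃ P ∈ doublyStochastic R ι, P *ᵥ a = b := by
  have hlin : IsLinearMap R fun P : Matrix ι ι R => P *ᵥ a :=
    ⟨fun P Q => Matrix.add_mulVec P Q a, fun r P => Matrix.smul_mulVec r P a⟩
  have hverts : (Set.range fun σ : Equiv.Perm ι => a ∘ σ) =
      (· *ᵥ a) '' {σ.permMatrix R | σ : Equiv.Perm ι} := by
    ext x
    simp [Matrix.permMatrix_mulVec]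
  rw [hverts, ← hlin.image_convexHull, ← doublyStochastic_eq_convexHull_permMatrix]
  rfl

section Majorization

variable {n : ℕ}

noncomputable def topSum (a : Fin n → ℝ) (k : ℕ) : ℝ :=
  ∑ i ∈ univ.filter (fun i : Fin n => (i : ℕ) < k), decRearrange a i

lemma antitone_decRearrange (a : Fin n → ℝ) : Antitone (decRearrange a) := fun _ _ hij =>
  neg_le_neg_iff.1 (Tuple.monotone_sort (fun j => -a j) hij)

lemma sum_decRearrange (a : Fin n → ℝ) : ∑ i, decRearrange a i = ∑ i, a i :=
  Equiv.sum_comp _ a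

lemma sum_le_topSum (a : Fin n → ℝ) (S : Finset (Fin n)) : ∑ i ∈ S, a i ≤ topSum a #S := by
  let σ := Tuple.sort fun j => -a j
  calc ∑ i ∈ S, a i = ∑ i ∈ S.map σ.symm.toEmbedding, decRearrange a i := by
        simp [decRearrange, σ]
    _ ≤ topSum a #S := by
        simpa [topSum] using
          sum_le_sum_filter_val_lt_card (antitone_decRearrange a) (S.map σ.symm.toEmbedding)

lemma exists_card_eq_sum_eq_topSum (a : Fin n → ℝ) {k : ℕ} (hk : k ≤ n) :
    ∃ S : Finset (Fin n), #S = k ∧ ∑ i ∈ S, a i = topSum a k :=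
  ⟨(univ.filter fun i : Fin n => (i : ℕ) < k).map (Tuple.sort fun j => -a j).toEmbedding,
    by simp [Fin.card_filter_val_lt, hk], by simp [topSum, decRearrange]⟩

theorem majorizes_iff_forall_finset {a b : Fin n → ℝ} :
    Majorizes a b ↔ ∑ i, b i = ∑ i, a i ∧
      ∀ S : Finset (Fin n), #S < n → ∑ i ∈ S, b i ≤ topSum a #S := by
  refine and_congr_right fun _ =>
    ⟨fun h S hS => (sum_le_topSum b S).trans (h _ hS), fun h k hk => ?_⟩
  obtain ⟨S, rfl, hS⟩ := exists_card_eq_sum_eq_topSum b hk.le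
  change topSum b #S ≤ topSum a #S
  exact hS ▸ h S hk

theorem convex_setOf_majorizes (a : Fin n → ℝ) : Convex ℝ {b | Majorizes a b} := by
  intro x hx y hy s t hs ht hst
  simp only [Set.mem_ofPred_eq, majorizes_iff_forall_finset] at *
  refine ⟨?_, fun S hS => ?_⟩
  · simp [sum_add_distrib, ← mul_sum, hx.1, hy.1, ← add_mul, hst]
  · calc ∑ i ∈ S, (s • x + t • y) i = s * ∑ i ∈ S, x i + t * ∑ i ∈ S, y i := by
          simp [sum_add_distrib, mul_sum]
      _ ≤ s * topSum a #S + t * topSum a #S := by gcongr; exacts [hx.2 S hS, hy.2 S hS]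
      _ = topSum a #S := by rw [← add_mul, hst, one_mul]

theorem majorizes_comp_perm (a : Fin n → ℝ) (σ : Equiv.Perm (Fin n)) : Majorizes a (a ∘ σ) := by
  refine majorizes_iff_forall_finset.2 ⟨Equiv.sum_comp σ a, fun S _ => ?_⟩
  simpa using sum_le_topSum a (S.map σ.toEmbedding)

theorem majorizes_of_mem_convexHull {a b : Fin n → ℝ}
    (hb : b ∈ convexHull ℝ (Set.range fun σ : Equiv.Perm (Fin n) => a ∘ σ)) : Majorizes a b :=
  convexHull_min (Set.range_subset_iff.2 (majorizes_comp_perm a)) (convex_setOf_majorizes a) hb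

lemma dotProduct_le_dotProduct_decRearrange (c b : Fin n → ℝ) :
    c ⬝ᵥ b ≤ decRearrange c ⬝ᵥ decRearrange b := by
  let σc := Tuple.sort fun j => -c j
  let σb := Tuple.sort fun j => -b j
  calc c ⬝ᵥ b = ∑ i, decRearrange c i * decRearrange b ((σc.trans σb.symm) i) := by
        simpa [dotProduct, decRearrange, σc, σb] using (Equiv.sum_comp σc fun j => c j * b j).symm
    _ ≤ _ := ((antitone_decRearrange c).monovary
        (antitone_decRearrange b)).sum_mul_comp_perm_le_sum_mul

theorem Majorizes.exists_dotProduct_le {a b : Fin n → ℝ} (h : Majorizes a b)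
    (c : Fin n → ℝ) : ∃ σ : Equiv.Perm (Fin n), c ⬝ᵥ b ≤ c ⬝ᵥ (a ∘ σ) := by
  let σc := Tuple.sort fun j => -c j
  let σa := Tuple.sort fun j => -a j
  refine ⟨σc.symm.trans σa, ?_⟩
  calc c ⬝ᵥ b ≤ decRearrange c ⬝ᵥ decRearrange b := dotProduct_le_dotProduct_decRearrange c b
    _ ≤ decRearrange c ⬝ᵥ decRearrange a :=
        sum_mul_le_sum_mul_of_antitone (antitone_decRearrange c) h.2
          (by rw [sum_decRearrange, sum_decRearrange, h.1])
    _ = c ⬝ᵥ (a ∘ (σc.symm.trans σa)) := by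
        simpa [dotProduct, decRearrange, σc, σa] using
          Equiv.sum_comp σc fun j => c j * a (σa (σc.symm j))

theorem mem_convexHull_of_majorizes {a b : Fin n → ℝ} (h : Majorizes a b) :
    b ∈ convexHull ℝ (Set.range fun σ : Equiv.Perm (Fin n) => a ∘ σ) :=
  mem_convexHull_of_forall_exists_dotProduct_le (Set.finite_range _) fun c =>
    let ⟨σ, hσ⟩ := h.exists_dotProduct_le c
    ⟨_, ⟨σ, rfl⟩, hσ⟩

theorem majorizes_iff_mem_convexHull {a b : Fin n → ℝ} :
    Majorizes a b ↔ b ∈ convexHull ℝ (Set.range fun σ : Equiv.Perm (Fin n) => a ∘ σ) :=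
  ⟨mem_convexHull_of_majorizes, majorizes_of_mem_convexHull⟩

end Majorization

lemma permMatrix_eq_permMatrix_inv {n : ℕ} (σ : Equiv.Perm (Fin n)) :
    permMatrix σ = Equiv.Perm.permMatrix ℝ σ⁻¹ := by
  ext i j
  simp [permMatrix, Equiv.Perm.permMatrix, PEquiv.toMatrix_apply, Equiv.symm_apply_eq]

lemma doublyStochastic_iff_mem {n : ℕ} {P : Matrix (Fin n) (Fin n) ℝ} :
    DoublyStochastic P ↔ P ∈ doublyStochastic ℝ (Fin n) := by
  rw [mem_doublyStochastic_iff_sum, DoublyStochastic, ColStochastic, RowStochastic]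
  tauto

theorem majorizes_iff_mem_permutohedron_general {n : ℕ} (a b : Fin n → ℝ) :
    (Majorizes a b ↔
      b ∈ convexHull ℝ
        {x : Fin n → ℝ | ∃ σ : Equiv.Perm (Fin n), x = (permMatrix σ).mulVec a}) ∧
    (Majorizes a b ↔
      ∃ P : Matrix (Fin n) (Fin n) ℝ, DoublyStochastic P ∧ b = P.mulVec a) := by
  have hverts : {x : Fin n → ℝ | ∃ σ : Equiv.Perm (Fin n), x = (permMatrix σ).mulVec a} =
      Set.range fun σ : Equiv.Perm (Fin n) => a ∘ σ := by
    ext x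
    simp only [Set.mem_ofPred_eq, Set.mem_range, permMatrix_eq_permMatrix_inv,
      Matrix.permMatrix_mulVec, eq_comm (a := x)]
    exact inv_surjective.exists
  rw [hverts, majorizes_iff_mem_convexHull, mem_convexHull_range_comp_perm_iff]
  simp only [doublyStochastic_iff_mem, eq_comm (a := b), and_self]

theorem majorizes_iff_mem_permutohedron {n : ℕ} (a b : Fin n → ℝ)
    (ha : ∀ i, 0 ≤ a i) (hb : ∀ i, 0 ≤ b i) :
    (Majorizes a b ↔
      b ∈ convexHull ℝ
        {x : Fin n → ℝ | ∃ σ : Equiv.Perm (Fin n), x = (permMatrix σ).mulVec a}) ∧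
    (Majorizes a b ↔
      ∃ P : Matrix (Fin n) (Fin n) ℝ, DoublyStochastic P ∧ b = P.mulVec a) :=
  majorizes_iff_mem_permutohedron_general a b
end
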